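/- Let Ω be a set and let ℰ be a nonempty set of functions Ω → ℝ that is closed under negation (φ ∈ ℰ implies −φ ∈ ℰ). Define d : Ω × Ω → [0,∞] by d(x,y) = sup { φ(y) − φ(x) : φ ∈ ℰ }, and assume d(x,y) < ∞ for all x, y ∈ Ω. Let n, m be positive integers, let k > 0, c ≥ 0, Γ ≥ 0, and let K : (0,∞) × Ω × Ω → ℂ satisfy |K(t,x,y)| ≤ Γ·t^{−n/(2m)}·exp( λ·(φ(y) − φ(x)) + (λ^{2m}·k + c)·t ) for every φ ∈ ℰ, every λ > 0, every t > 0 and all x, y ∈ Ω. Then, with σ' = (2m−1)·(2m)^{−2m/(2m−1)}·k^{−1/(2m−1)}, one has |K(t,x,y)| ≤ Γ·t^{−n/(2m)}·exp( −σ'·d(x,y)^{2m/(2m−1)}·t^{−1/(2m−1)} + c·t ) for all t > 0 and x, y ∈ Ω. -/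

import Mathlib

/-!
Taking the bound for `-φ` and letting `φ` run through `ℰ` replaces `λ (φ y - φ x)` by
`-λ d(x,y)`; by continuity the resulting bound also holds at `λ = 0`. It remains to minimise
`-λ D + λ^(2m) k t` over `λ ≥ 0`: the minimiser is `λ = (D / (2m k t))^(1/(2m-1))`, and the
minimum value is `-σ' D^(2m/(2m-1)) t^(-1/(2m-1))`.
-/

open Real Set

theorem neg_mul_add_rpow_mul_eq {p a D : ℝ} (hp : 1 < p) (ha : 0 < a) (hD : 0 ≤ D) :
    -((D / (p * a)) ^ (p - 1)⁻¹ * D) + ((D / (p * a)) ^ (p - 1)⁻¹) ^ p * a =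
      -((p - 1) * p ^ (-p / (p - 1)) * a ^ (-1 / (p - 1))) * D ^ (p / (p - 1)) := by
  have hq : 0 < p - 1 := by linarith
  have hpa : 0 < p * a := by positivity
  set u := D / (p * a) with hu
  have hu0 : 0 ≤ u := by positivity
  have hDu : D = p * a * u := by rw [hu]; field_simp
  have h_pow : (u ^ (p - 1)⁻¹) ^ p = u ^ (p / (p - 1)) := by
    rw [← rpow_mul hu0, inv_mul_eq_div]
  have h_mul : u ^ (p - 1)⁻¹ * u = u ^ (p / (p - 1)) := by
    rw [← rpow_add_one' hu0 (by positivity)]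
    congr 1; field_simp; ring
  have h_u : u ^ (p / (p - 1)) = D ^ (p / (p - 1)) * p ^ (-p / (p - 1)) * a ^ (-p / (p - 1)) := by
    rw [hu, div_rpow hD hpa.le, mul_rpow (by positivity) ha.le, neg_div,
      rpow_neg (by positivity), rpow_neg ha.le]
    ring
  have h_a : a * a ^ (-p / (p - 1)) = a ^ (-1 / (p - 1)) := by
    rw [show -1 / (p - 1) = 1 + -p / (p - 1) by field_simp; ring, rpow_add ha, rpow_one]
  calc -(u ^ (p - 1)⁻¹ * D) + (u ^ (p - 1)⁻¹) ^ p * a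
      = -((p - 1) * a * u ^ (p / (p - 1))) := by
        rw [h_pow, hDu, ← h_mul]; ring
    _ = _ := by rw [h_u, ← h_a]; ring

theorem IsLUB.nonneg_of_neg_mem {Ω : Type*} {E : Set (Ω → ℝ)} (hE_ne : E.Nonempty)
    (hE_neg : ∀ φ ∈ E, -φ ∈ E) {x y : Ω} {D : ℝ}
    (hD : IsLUB {r : ℝ | ∃ φ ∈ E, r = φ y - φ x} D) : 0 ≤ D := by
  obtain ⟨φ, hφ⟩ := hE_ne
  have h₁ : φ y - φ x ≤ D := hD.1 ⟨φ, hφ, rfl⟩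
  have h₂ : (-φ) y - (-φ) x ≤ D := hD.1 ⟨-φ, hE_neg φ hφ, rfl⟩
  simp only [Pi.neg_apply] at h₂
  linarith

theorem statement10_general {Ω : Type*} (E : Set (Ω → ℝ)) (hE_ne : E.Nonempty)
    (hE_neg : ∀ φ ∈ E, -φ ∈ E)
    (d : Ω → Ω → ℝ)
    (hd : ∀ x y : Ω, IsLUB {r : ℝ | ∃ φ ∈ E, r = φ y - φ x} (d x y))
    (n m : ℕ) (hm : 0 < m)
    (k c Γ : ℝ) (hk : 0 < k)
    (K : ℝ → Ω → Ω → ℂ)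
    (hbound : ∀ φ ∈ E, ∀ lam : ℝ, 0 < lam → ∀ t : ℝ, 0 < t → ∀ x y : Ω,
      ‖K t x y‖ ≤ Γ * t ^ (-(n : ℝ) / (2 * (m : ℝ))) *
        Real.exp (lam * (φ y - φ x) + (lam ^ (2 * (m : ℝ)) * k + c) * t)) :
    ∀ t : ℝ, 0 < t → ∀ x y : Ω,
      ‖K t x y‖ ≤ Γ * t ^ (-(n : ℝ) / (2 * (m : ℝ))) *
        Real.exp (-((2 * (m : ℝ) - 1) * (2 * (m : ℝ)) ^ (-(2 * (m : ℝ)) / (2 * (m : ℝ) - 1)) *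
            k ^ (-(1 : ℝ) / (2 * (m : ℝ) - 1))) *
          d x y ^ (2 * (m : ℝ) / (2 * (m : ℝ) - 1)) * t ^ (-(1 : ℝ) / (2 * (m : ℝ) - 1)) +
          c * t) := by
  intro t ht x y
  set p : ℝ := 2 * (m : ℝ) with hp_def
  clear_value p
  have hp : 1 < p := by
    have : (1 : ℝ) ≤ m := by exact_mod_cast hm
    linarith
  set bound : ℝ → ℝ → ℝ := fun lam r ↦
    Γ * t ^ (-(n : ℝ) / p) * exp (lam * r + (lam ^ p * k + c) * t)
  have h_cont_r : ∀ lam, Continuous (bound lam) := fun lam ↦ by fun_prop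
  have h_cont_lam : ∀ r, Continuous (bound · r) := fun r ↦ by
    have := continuous_rpow_const (by linarith : (0 : ℝ) ≤ p)
    fun_prop
  -- Every `-φ` is admissible, and `φ x - φ y` comes arbitrarily close to `-d x y`.
  have h_sup : ∀ lam > 0, ‖K t x y‖ ≤ bound lam (-d x y) := fun lam hlam ↦ by
    obtain ⟨φ₀, hφ₀⟩ := hE_ne
    refine le_on_closure (s := (fun r ↦ -r) '' {r | ∃ φ ∈ E, r = φ y - φ x}) ?_
      continuousOn_const (h_cont_r lam).continuousOn
      (map_mem_closure continuous_neg ((hd x y).mem_closure ⟨_, φ₀, hφ₀, rfl⟩) (mapsTo_image _ _))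
    rintro _ ⟨_, ⟨φ, hφ, rfl⟩, rfl⟩
    have := hbound (-φ) (hE_neg φ hφ) lam hlam t ht x y
    rwa [Pi.neg_apply, Pi.neg_apply, neg_sub_neg, ← neg_sub] at this
  -- The optimal `λ` vanishes when `d x y = 0`.
  have h_inf : ∀ lam ≥ 0, ‖K t x y‖ ≤ bound lam (-d x y) := fun lam hlam ↦
    le_on_closure (s := Ioi 0) h_sup continuousOn_const (h_cont_lam _).continuousOn
      (by rwa [closure_Ioi])
  have hD := (hd x y).nonneg_of_neg_mem hE_ne hE_neg
  have h_opt := neg_mul_add_rpow_mul_eq hp (mul_pos hk ht) hD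
  rw [mul_rpow hk.le ht.le] at h_opt
  convert h_inf ((d x y / (p * (k * t))) ^ (p - 1)⁻¹) (by positivity) using 3
  linear_combination -h_opt

/-- Let `ℰ` be a nonempty set of functions `Ω → ℝ` closed under
negation and let `d(x,y) = sup {φ(y) − φ(x) : φ ∈ ℰ}` be finite for all `x, y`
(formalized: `d x y` is the least upper bound of that set of reals). If
`|K(t,x,y)| ≤ Γ·t^(−n/(2m))·exp(λ·(φ(y)−φ(x)) + (λ^(2m)·k + c)·t)` for every `φ ∈ ℰ`,
`λ > 0`, `t > 0`, `x, y`, then with `σ' = (2m−1)·(2m)^(−2m/(2m−1))·k^(−1/(2m−1))` one has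
`|K(t,x,y)| ≤ Γ·t^(−n/(2m))·exp(−σ'·d(x,y)^(2m/(2m−1))·t^(−1/(2m−1)) + c·t)`. -/
theorem statement10 {Ω : Type*} (E : Set (Ω → ℝ)) (hE_ne : E.Nonempty)
    (hE_neg : ∀ φ ∈ E, -φ ∈ E)
    (d : Ω → Ω → ℝ)
    (hd : ∀ x y : Ω, IsLUB {r : ℝ | ∃ φ ∈ E, r = φ y - φ x} (d x y))
    (n m : ℕ) (hn : 0 < n) (hm : 0 < m)
    (k c Γ : ℝ) (hk : 0 < k) (hc : 0 ≤ c) (hΓ : 0 ≤ Γ)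
    (K : ℝ → Ω → Ω → ℂ)
    (hbound : ∀ φ ∈ E, ∀ lam : ℝ, 0 < lam → ∀ t : ℝ, 0 < t → ∀ x y : Ω,
      ‖K t x y‖ ≤ Γ * t ^ (-(n : ℝ) / (2 * (m : ℝ))) *
        Real.exp (lam * (φ y - φ x) + (lam ^ (2 * (m : ℝ)) * k + c) * t)) :
    ∀ t : ℝ, 0 < t → ∀ x y : Ω,
      ‖K t x y‖ ≤ Γ * t ^ (-(n : ℝ) / (2 * (m : ℝ))) *
        Real.exp (-((2 * (m : ℝ) - 1) * (2 * (m : ℝ)) ^ (-(2 * (m : ℝ)) / (2 * (m : ℝ) - 1)) *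
            k ^ (-(1 : ℝ) / (2 * (m : ℝ) - 1))) *
          d x y ^ (2 * (m : ℝ) / (2 * (m : ℝ) - 1)) * t ^ (-(1 : ℝ) / (2 * (m : ℝ) - 1)) +
          c * t) :=
  statement10_general E hE_ne hE_neg d hd n m hm k c Γ hk K hbound
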